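/- arXiv:2310.11751 — 11 statements merged into one kernel-verified Lean document; each statement's English description precedes it below -/
import Mathlib

section
/- Under Equal Allocation, every Nash equilibrium ((d_H*, e_H*), (d_L*, e_L*)) of the joint contribution-and-effort game has zero contributions: d_H* = d_L* = 0. (No incentive contribution at any EA equilibrium.) -/
noncomputable section

/-- Team solution accuracy as a function of the effort profile `(eH, eL) ∈ {0,1}²`. -/
def pT (a : ℝ) (eH eL : ℕ) : ℝ :=
  if eH + eL = 0 then 1 / 2 else if eH + eL = 1 then (2 * a + 1) / 4 else a

/-- A member's payoff in the joint contribution-and-effort game under Equal Allocation: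
valuation `V`, ability `a`, effort cost `c`, own contribution `dSelf`, the other
member's contribution `dOther`, own effort `eSelf`, the other member's effort `eOther`.
Each member receives half of the incentive pool. -/
def UEA (V a c : ℝ) (dSelf dOther : ℝ) (eSelf eOther : ℕ) : ℝ :=
  V * pT a eSelf eOther + (1 / 2) * (dSelf + dOther) - dSelf - c * eSelf

/-- Nash equilibrium of the joint contribution-and-effort game under Equal Allocation:
no member can strictly increase her payoff by unilaterally changing her own
contribution-effort pair `(d_m, e_m)` with `d_m ∈ {0, D}` and `e_m ∈ {0, 1}`. -/
def isNEjointEA (a c D VH VL : ℝ) (dH dL : ℝ) (eH eL : ℕ) : Prop :=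
  (∀ d' e', (d' = 0 ∨ d' = D) → (e' = 0 ∨ e' = 1) →
    UEA VH a c d' dL e' eL ≤ UEA VH a c dH dL eH eL) ∧
  (∀ d' e', (d' = 0 ∨ d' = D) → (e' = 0 ∨ e' = 1) →
    UEA VL a c d' dH e' eH ≤ UEA VL a c dL dH eL eH)

/-! Under Equal Allocation a member who contributes `D` gets only `D / 2` of it back through
the shared pool, whatever the efforts, so withdrawing a contribution is always a strictly
profitable deviation. -/

theorem UEA_eq_UEA_zero_sub (V a c dSelf dOther : ℝ) (eSelf eOther : ℕ) :
    UEA V a c dSelf dOther eSelf eOther = UEA V a c 0 dOther eSelf eOther - dSelf / 2 := by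
  simp only [UEA]
  ring

theorem UEA_lt_UEA_zero {V a c dSelf : ℝ} (dOther : ℝ) (eSelf eOther : ℕ) (hd : 0 < dSelf) :
    UEA V a c dSelf dOther eSelf eOther < UEA V a c 0 dOther eSelf eOther := by
  rw [UEA_eq_UEA_zero_sub]
  linarith

theorem eq_zero_of_UEA_zero_le {V a c dSelf dOther : ℝ} {eSelf eOther : ℕ} (hd : 0 ≤ dSelf)
    (h : UEA V a c 0 dOther eSelf eOther ≤ UEA V a c dSelf dOther eSelf eOther) :
    dSelf = 0 :=
  le_antisymm (not_lt.mp fun hpos => (UEA_lt_UEA_zero dOther eSelf eOther hpos).not_ge h) hd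

theorem EA_no_contribution_at_equilibrium_general
    (a c D VH VL : ℝ)
    (hD : 0 < D)
    (dH dL : ℝ) (eH eL : ℕ)
    (hdH : dH = 0 ∨ dH = D) (hdL : dL = 0 ∨ dL = D)
    (heH : eH = 0 ∨ eH = 1) (heL : eL = 0 ∨ eL = 1)
    (hNE : isNEjointEA a c D VH VL dH dL eH eL) :
    dH = 0 ∧ dL = 0 := by
  have hdH_nonneg : 0 ≤ dH := hdH.elim (·.ge) (· ▸ hD.le)
  have hdL_nonneg : 0 ≤ dL := hdL.elim (·.ge) (· ▸ hD.le)
  exact ⟨eq_zero_of_UEA_zero_le hdH_nonneg (hNE.1 0 eH (Or.inl rfl) heH),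
    eq_zero_of_UEA_zero_le hdL_nonneg (hNE.2 0 eL (Or.inl rfl) heL)⟩

/-- under Equal Allocation, every Nash equilibrium of the joint
contribution-and-effort game has zero contributions. -/
theorem EA_no_contribution_at_equilibrium
    (a c D VH VL : ℝ)
    (ha : 1 / 2 < a ∧ a ≤ 1) (hc : 0 < c) (hD : 0 < D)
    (hVL : 0 < VL) (hV : VL < VH)
    (dH dL : ℝ) (eH eL : ℕ)
    (hdH : dH = 0 ∨ dH = D) (hdL : dL = 0 ∨ dL = D)
    (heH : eH = 0 ∨ eH = 1) (heL : eL = 0 ∨ eL = 1)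
    (hNE : isNEjointEA a c D VH VL dH dL eH eL) :
    dH = 0 ∧ dL = 0 :=
  EA_no_contribution_at_equilibrium_general a c D VH VL hD dH dL eH eL hdH hdL heH heL hNE
end
end

section
/- Under Equal Allocation, if 0 < c ≤ c_L where c_L = (2a−1)V_L/4, then the profile with d_H = d_L = 0 and e_H = e_L = 1 is a Nash equilibrium of the joint contribution-and-effort game, for every incentive volume D > 0. (Theorem 1, low-cost region.) -/
/-! Contributing `D` returns only `D / 2` to the contributor, so contributing never pays; and
against a working partner, working raises the accuracy from `(2a+1)/4` to `a`, worth
`(2a-1)V/4 ≥ c`. Since `V_H > V_L`, the cost bound for `L` also covers `H`. -/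

noncomputable section

theorem pT_zero_one (a : ℝ) : pT a 0 1 = (2 * a + 1) / 4 := by
  norm_num [pT]

theorem pT_one_one (a : ℝ) : pT a 1 1 = a := by
  norm_num [pT]

theorem UEA_eq_sub_half (V a c d dOther : ℝ) (e eOther : ℕ) :
    UEA V a c d dOther e eOther = UEA V a c 0 dOther e eOther - d / 2 := by
  simp only [UEA]
  ring

theorem UEA_shirk_le_work {V a c : ℝ} (hc : c ≤ (2 * a - 1) * V / 4) (d dOther : ℝ) :
    UEA V a c d dOther 0 1 ≤ UEA V a c d dOther 1 1 := by
  simp only [UEA, pT_zero_one, pT_one_one]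
  push_cast
  linarith

theorem UEA_le_work_of_cost_le {V a c D : ℝ} (hD : 0 ≤ D) (hc : c ≤ (2 * a - 1) * V / 4)
    {d' : ℝ} {e' : ℕ} (hd' : d' = 0 ∨ d' = D) (he' : e' = 0 ∨ e' = 1) (dOther : ℝ) :
    UEA V a c d' dOther e' 1 ≤ UEA V a c 0 dOther 1 1 := by
  have hd'_nonneg : 0 ≤ d' := hd'.elim (·.symm ▸ le_rfl) (·.symm ▸ hD)
  have hwork : UEA V a c 0 dOther e' 1 ≤ UEA V a c 0 dOther 1 1 := by
    rcases he' with rfl | rfl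
    · exact UEA_shirk_le_work hc 0 dOther
    · exact le_rfl
  rw [UEA_eq_sub_half V a c d']
  linarith

theorem EA_equilibrium_low_cost_general
    (a c D VH VL : ℝ)
    (ha : 1 / 2 < a ∧ a ≤ 1) (hD : 0 < D)
    (hV : VL < VH)
    (hcL : c ≤ (2 * a - 1) * VL / 4) :
    isNEjointEA a c D VH VL 0 0 1 1 := by
  have hcH : c ≤ (2 * a - 1) * VH / 4 := hcL.trans (by gcongr; linarith [ha.1])
  exact ⟨fun _ _ hd he => UEA_le_work_of_cost_le hD.le hcH hd he 0,
    fun _ _ hd he => UEA_le_work_of_cost_le hD.le hcL hd he 0⟩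

/-- Theorem 1, low-cost region: under Equal Allocation, if
`0 < c ≤ c_L = (2a-1)V_L/4`, then `(d_H, d_L) = (0, 0)` together with
`(e_H, e_L) = (1, 1)` is a Nash equilibrium, for every incentive volume `D > 0`. -/
theorem EA_equilibrium_low_cost
    (a c D VH VL : ℝ)
    (ha : 1 / 2 < a ∧ a ≤ 1) (hc : 0 < c) (hD : 0 < D)
    (hVL : 0 < VL) (hV : VL < VH)
    (hHetero : VH / VL > max ((14 * a - 5) / (6 * a - 1)) ((2 * a + 1) / (3 - 2 * a)))
    (hcL : c ≤ (2 * a - 1) * VL / 4) :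
    isNEjointEA a c D VH VL 0 0 1 1 :=
  EA_equilibrium_low_cost_general a c D VH VL ha hD hV hcL
end
end

section
/- Under Equal Allocation, if c_L < c ≤ c_H where c_L = (2a−1)V_L/4 and c_H = (2a−1)V_H/4, then the profile with d_H = d_L = 0, e_H = 1 and e_L = 0 is a Nash equilibrium of the joint contribution-and-effort game, for every incentive volume D > 0. (Theorem 1, moderate-cost region.) -/
noncomputable section

/-!
Under Equal Allocation a member gets back only half of her own contribution, so contributing
never pays. A member's own effort raises the team accuracy by `(2a - 1)/4` whether or not the
other member works, so her effort pays exactly when `c ≤ (2a - 1)V/4`: `H` works and `L` shirks.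
-/

section BestResponse

variable {V a c D dOther : ℝ} {eOther : ℕ}

def IsBestResponseEA (V a c D dOther : ℝ) (eOther : ℕ) (d : ℝ) (e : ℕ) : Prop :=
  ∀ d' e', (d' = 0 ∨ d' = D) → (e' = 0 ∨ e' = 1) →
    UEA V a c d' dOther e' eOther ≤ UEA V a c d dOther e eOther

theorem isNEjointEA_iff {VH VL dH dL : ℝ} {eH eL : ℕ} :
    isNEjointEA a c D VH VL dH dL eH eL ↔
      IsBestResponseEA VH a c D dL eL dH eH ∧ IsBestResponseEA VL a c D dH eH dL eL :=
  Iff.rfl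

theorem pT_one_sub_pT_zero (h : eOther ≤ 1) : pT a 1 eOther - pT a 0 eOther = (2 * a - 1) / 4 := by
  interval_cases eOther <;> norm_num [pT] <;> ring

theorem UEA_one_sub_UEA_zero (d : ℝ) (h : eOther ≤ 1) :
    UEA V a c d dOther 1 eOther - UEA V a c d dOther 0 eOther = (2 * a - 1) * V / 4 - c := by
  have hp := pT_one_sub_pT_zero (a := a) h
  simp only [UEA, Nat.cast_one, Nat.cast_zero]
  linear_combination V * hp

theorem UEA_contribute (eSelf : ℕ) :
    UEA V a c D dOther eSelf eOther = UEA V a c 0 dOther eSelf eOther - D / 2 := by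
  simp only [UEA]
  ring

theorem isBestResponseEA_zero_of_effort {e : ℕ} (hD : 0 ≤ D)
    (h : ∀ e', (e' = 0 ∨ e' = 1) → UEA V a c 0 dOther e' eOther ≤ UEA V a c 0 dOther e eOther) :
    IsBestResponseEA V a c D dOther eOther 0 e := by
  rintro d' e' (rfl | rfl) he'
  · exact h e' he'
  · rw [UEA_contribute]
    linarith [h e' he']

theorem isBestResponseEA_work (hD : 0 ≤ D) (hOther : eOther ≤ 1) (hc : c ≤ (2 * a - 1) * V / 4) :
    IsBestResponseEA V a c D dOther eOther 0 1 := by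
  refine isBestResponseEA_zero_of_effort hD ?_
  rintro e' (rfl | rfl)
  · linarith [UEA_one_sub_UEA_zero (V := V) (a := a) (c := c) (dOther := dOther) 0 hOther]
  · exact le_rfl

theorem isBestResponseEA_shirk (hD : 0 ≤ D) (hOther : eOther ≤ 1) (hc : (2 * a - 1) * V / 4 ≤ c) :
    IsBestResponseEA V a c D dOther eOther 0 0 := by
  refine isBestResponseEA_zero_of_effort hD ?_
  rintro e' (rfl | rfl)
  · exact le_rfl
  · linarith [UEA_one_sub_UEA_zero (V := V) (a := a) (c := c) (dOther := dOther) 0 hOther]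

end BestResponse

theorem EA_equilibrium_moderate_cost_general
    (a c D VH VL : ℝ)
    (hD : 0 < D)
    (hcL : (2 * a - 1) * VL / 4 < c) (hcH : c ≤ (2 * a - 1) * VH / 4) :
    isNEjointEA a c D VH VL 0 0 1 0 :=
  isNEjointEA_iff.2
    ⟨isBestResponseEA_work hD.le zero_le_one hcH, isBestResponseEA_shirk hD.le le_rfl hcL.le⟩

/-- Theorem 1, moderate-cost region: under Equal Allocation, if
`c_L < c ≤ c_H` where `c_L = (2a-1)V_L/4` and `c_H = (2a-1)V_H/4`, then
`(d_H, d_L) = (0, 0)` together with `(e_H, e_L) = (1, 0)` is a Nash equilibrium,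
for every incentive volume `D > 0`. -/
theorem EA_equilibrium_moderate_cost
    (a c D VH VL : ℝ)
    (ha : 1 / 2 < a ∧ a ≤ 1) (hc : 0 < c) (hD : 0 < D)
    (hVL : 0 < VL) (hV : VL < VH)
    (hHetero : VH / VL > max ((14 * a - 5) / (6 * a - 1)) ((2 * a + 1) / (3 - 2 * a)))
    (hcL : (2 * a - 1) * VL / 4 < c) (hcH : c ≤ (2 * a - 1) * VH / 4) :
    isNEjointEA a c D VH VL 0 0 1 0 :=
  EA_equilibrium_moderate_cost_general a c D VH VL hD hcL hcH
end
end

section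
/- In the effort game under Output Agreement with pooled incentive P ≥ 0, the profile (e_H, e_L) = (1, 1) is a Nash equilibrium if and only if c ≤ c_L + ((2a−1)²/4)·P, where c_L = (2a−1)V_L/4. (Stage-II equilibrium characterization under OA, both exerting effort.) -/
noncomputable section

/-- Each member's expected share of the incentive pool under Output Agreement. -/
def pOA (a : ℝ) (eH eL : ℕ) : ℝ :=
  if eH = 1 ∧ eL = 1 then (2 * a ^ 2 - 2 * a + 1) / 2 else 1 / 4

/-- Member H's payoff in the effort game under Output Agreement with pooled incentive `P`. -/
def uOAH (a c P VH : ℝ) (eH eL : ℕ) : ℝ :=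
  VH * pT a eH eL + pOA a eH eL * P - c * eH

/-- Member L's payoff in the effort game under Output Agreement with pooled incentive `P`. -/
def uOAL (a c P VL : ℝ) (eH eL : ℕ) : ℝ :=
  VL * pT a eH eL + pOA a eH eL * P - c * eL

/-- Nash equilibrium of the effort game under Output Agreement: no member can strictly
increase her payoff by unilaterally changing her own effort in `{0, 1}`. -/
def isNE_OA (a c P VH VL : ℝ) (eH eL : ℕ) : Prop :=
  (∀ e', e' = 0 ∨ e' = 1 → uOAH a c P VH e' eL ≤ uOAH a c P VH eH eL) ∧
  (∀ e', e' = 0 ∨ e' = 1 → uOAL a c P VL eH e' ≤ uOAL a c P VL eH eL)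

section EffortGame

variable (a c P V : ℝ)

theorem pOA_one_one_sub_pOA : pOA a 1 1 - pOA a 0 1 = (2 * a - 1) ^ 2 / 4 := by
  norm_num [pOA]
  ring

theorem uOAH_one_one_sub_uOAH_zero_one :
    uOAH a c P V 1 1 - uOAH a c P V 0 1 = (2 * a - 1) * V / 4 + (2 * a - 1) ^ 2 / 4 * P - c := by
  have hpOA := pOA_one_one_sub_pOA a
  simp only [uOAH, pT, pOA] at hpOA ⊢
  norm_num at hpOA ⊢
  linear_combination P * hpOA

theorem uOAL_one_one_sub_uOAL_one_zero :
    uOAL a c P V 1 1 - uOAL a c P V 1 0 = (2 * a - 1) * V / 4 + (2 * a - 1) ^ 2 / 4 * P - c := by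
  have hpOA := pOA_one_one_sub_pOA a
  simp only [uOAL, pT, pOA] at hpOA ⊢
  norm_num at hpOA ⊢
  linear_combination P * hpOA

end EffortGame

theorem isNE_OA_one_one_iff (a c P VH VL : ℝ) :
    isNE_OA a c P VH VL 1 1 ↔
      uOAH a c P VH 0 1 ≤ uOAH a c P VH 1 1 ∧ uOAL a c P VL 1 0 ≤ uOAL a c P VL 1 1 := by
  refine and_congr ⟨fun h => h 0 (.inl rfl), ?_⟩ ⟨fun h => h 0 (.inl rfl), ?_⟩ <;>
    rintro h e' (rfl | rfl) <;> first | exact h | exact le_rfl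

theorem OA_NE_both_effort_iff_general
    (a c P VH VL : ℝ)
    (ha : 1 / 2 < a ∧ a ≤ 1)
    (hV : VL < VH) :
    isNE_OA a c P VH VL 1 1 ↔
      c ≤ (2 * a - 1) * VL / 4 + ((2 * a - 1) ^ 2 / 4) * P := by
  rw [isNE_OA_one_one_iff, ← sub_nonneg, uOAH_one_one_sub_uOAH_zero_one,
    ← sub_nonneg (b := uOAL _ _ _ _ _ _), uOAL_one_one_sub_uOAL_one_zero]
  -- H values the team's accuracy more than L, so her incentive to work is the larger one.
  have hHL : (2 * a - 1) * VL ≤ (2 * a - 1) * VH :=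
    mul_le_mul_of_nonneg_left hV.le (by linarith [ha.1])
  constructor
  · rintro ⟨-, hL⟩
    linarith
  · intro hc
    constructor <;> linarith

/-- under Output Agreement with pooled incentive `P ≥ 0`, the profile
`(e_H, e_L) = (1, 1)` is a Nash equilibrium iff `c ≤ c_L + ((2a-1)²/4)·P`, where
`c_L = (2a-1)V_L/4`. -/
theorem OA_NE_both_effort_iff
    (a c P VH VL : ℝ)
    (ha : 1 / 2 < a ∧ a ≤ 1) (hc : 0 < c) (hP : 0 ≤ P)
    (hVL : 0 < VL) (hV : VL < VH) :
    isNE_OA a c P VH VL 1 1 ↔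
      c ≤ (2 * a - 1) * VL / 4 + ((2 * a - 1) ^ 2 / 4) * P :=
  OA_NE_both_effort_iff_general a c P VH VL ha hV
end
end

section
/- In the effort game under Output Agreement with pooled incentive P ≥ 0, the profile (e_H, e_L) = (0, 0) is a Nash equilibrium if and only if c ≥ c_H, where c_H = (2a−1)V_H/4. (Stage-II equilibrium characterization under OA, neither exerting effort.) -/
noncomputable section

theorem forall_eq_zero_or_eq_one_le_at_zero_iff {α : Type*} [Preorder α] (f : ℕ → α) :
    (∀ e, e = 0 ∨ e = 1 → f e ≤ f 0) ↔ f 1 ≤ f 0 :=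
  ⟨fun h ↦ h 1 (Or.inr rfl), by rintro h e (rfl | rfl) <;> [exact le_rfl; exact h]⟩

-- Starting from no effort, the pool share stays at `1/4`, so only accuracy and cost change.
theorem uOAH_one_zero_sub_zero_zero (a c P VH : ℝ) :
    uOAH a c P VH 1 0 - uOAH a c P VH 0 0 = (2 * a - 1) * VH / 4 - c := by
  simp only [uOAH, pT, pOA]
  norm_num
  ring

theorem uOAL_zero_one_sub_zero_zero (a c P VL : ℝ) :
    uOAL a c P VL 0 1 - uOAL a c P VL 0 0 = (2 * a - 1) * VL / 4 - c := by
  simp only [uOAL, pT, pOA]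
  norm_num
  ring

theorem isNE_OA_zero_zero_iff (a c P VH VL : ℝ) :
    isNE_OA a c P VH VL 0 0 ↔ (2 * a - 1) * VH / 4 ≤ c ∧ (2 * a - 1) * VL / 4 ≤ c := by
  have hH := uOAH_one_zero_sub_zero_zero a c P VH
  have hL := uOAL_zero_one_sub_zero_zero a c P VL
  unfold isNE_OA
  rw [forall_eq_zero_or_eq_one_le_at_zero_iff (uOAH a c P VH · 0),
    forall_eq_zero_or_eq_one_le_at_zero_iff (uOAL a c P VL 0 ·)]
  constructor <;> rintro ⟨h₁, h₂⟩ <;> constructor <;> linarith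

theorem OA_NE_no_effort_iff_general
    (a c P VH VL : ℝ)
    (ha : 1 / 2 < a ∧ a ≤ 1)
    (hV : VL < VH) :
    isNE_OA a c P VH VL 0 0 ↔ (2 * a - 1) * VH / 4 ≤ c := by
  rw [isNE_OA_zero_zero_iff, and_iff_left_iff_imp]
  intro hH
  have hL_le_hH : (2 * a - 1) * VL / 4 ≤ (2 * a - 1) * VH / 4 := by
    gcongr
    linarith [ha.1]
  exact hL_le_hH.trans hH

/-- under Output Agreement with pooled incentive `P ≥ 0`, the profile
`(e_H, e_L) = (0, 0)` is a Nash equilibrium iff `c ≥ c_H = (2a-1)V_H/4`. -/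
theorem OA_NE_no_effort_iff
    (a c P VH VL : ℝ)
    (ha : 1 / 2 < a ∧ a ≤ 1) (hc : 0 < c) (hP : 0 ≤ P)
    (hVL : 0 < VL) (hV : VL < VH) :
    isNE_OA a c P VH VL 0 0 ↔ (2 * a - 1) * VH / 4 ≤ c :=
  OA_NE_no_effort_iff_general a c P VH VL ha hV
end
end

section
/- In the effort game under Output Agreement with pooled incentive P ≥ 0, the profile (e_H, e_L) = (1, 0) is a Nash equilibrium if and only if c_L + ((2a−1)²/4)·P ≤ c ≤ c_H, where c_L = (2a−1)V_L/4 and c_H = (2a−1)V_H/4. (Stage-II equilibrium characterization under OA, only the high-valuation member exerting effort.) -/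
noncomputable section

theorem isNE_OA_iff_no_profitable_switch {a c P VH VL : ℝ} {eH eL : ℕ}
    (heH : eH = 0 ∨ eH = 1) (heL : eL = 0 ∨ eL = 1) :
    isNE_OA a c P VH VL eH eL ↔
      uOAH a c P VH (1 - eH) eL ≤ uOAH a c P VH eH eL ∧
        uOAL a c P VL eH (1 - eL) ≤ uOAL a c P VL eH eL := by
  constructor
  · rintro ⟨hH, hL⟩
    exact ⟨hH _ (by omega), hL _ (by omega)⟩
  · rintro ⟨hH, hL⟩
    refine ⟨fun e' he' => ?_, fun e' he' => ?_⟩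
    · obtain rfl | rfl : e' = eH ∨ e' = 1 - eH := by omega
      exacts [le_rfl, hH]
    · obtain rfl | rfl : e' = eL ∨ e' = 1 - eL := by omega
      exacts [le_rfl, hL]

theorem uOAH_zero_zero_le_one_zero_iff {a c P VH : ℝ} :
    uOAH a c P VH 0 0 ≤ uOAH a c P VH 1 0 ↔ c ≤ (2 * a - 1) * VH / 4 := by
  have gain : uOAH a c P VH 1 0 - uOAH a c P VH 0 0 = (2 * a - 1) * VH / 4 - c := by
    norm_num [uOAH, pT, pOA]
    ring
  rw [← sub_nonneg, gain, sub_nonneg]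

/-- The pool share gained by L when she joins, `(2a²-2a+1)/2 - 1/4`, equals `(2a-1)²/4`. -/
theorem uOAL_one_one_le_one_zero_iff {a c P VL : ℝ} :
    uOAL a c P VL 1 1 ≤ uOAL a c P VL 1 0 ↔
      (2 * a - 1) * VL / 4 + ((2 * a - 1) ^ 2 / 4) * P ≤ c := by
  have gain : uOAL a c P VL 1 1 - uOAL a c P VL 1 0 =
      (2 * a - 1) * VL / 4 + ((2 * a - 1) ^ 2 / 4) * P - c := by
    norm_num [uOAL, pT, pOA]
    ring
  rw [← sub_nonpos, gain, sub_nonpos]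

theorem OA_NE_only_H_effort_iff_general
    (a c P VH VL : ℝ) :
    isNE_OA a c P VH VL 1 0 ↔
      ((2 * a - 1) * VL / 4 + ((2 * a - 1) ^ 2 / 4) * P ≤ c ∧
        c ≤ (2 * a - 1) * VH / 4) := by
  rw [isNE_OA_iff_no_profitable_switch (Or.inr rfl) (Or.inl rfl), Nat.sub_self, Nat.sub_zero,
    uOAH_zero_zero_le_one_zero_iff, uOAL_one_one_le_one_zero_iff, and_comm]

/-- under Output Agreement with pooled incentive `P ≥ 0`, the profile
`(e_H, e_L) = (1, 0)` is a Nash equilibrium iff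
`c_L + ((2a-1)²/4)·P ≤ c ≤ c_H`, where `c_L = (2a-1)V_L/4` and `c_H = (2a-1)V_H/4`. -/
theorem OA_NE_only_H_effort_iff
    (a c P VH VL : ℝ)
    (ha : 1 / 2 < a ∧ a ≤ 1) (hc : 0 < c) (hP : 0 ≤ P)
    (hVL : 0 < VL) (hV : VL < VH) :
    isNE_OA a c P VH VL 1 0 ↔
      ((2 * a - 1) * VL / 4 + ((2 * a - 1) ^ 2 / 4) * P ≤ c ∧
        c ≤ (2 * a - 1) * VH / 4) :=
  OA_NE_only_H_effort_iff_general a c P VH VL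
end
end

section
/- In the effort game under the Shapley Value mechanism with pooled incentive P ≥ 0, the profile (e_H, e_L) = (1, 1) is a Nash equilibrium if and only if c ≤ c_L + P/2, where c_L = (2a−1)V_L/4. (Stage-II equilibrium characterization under SV, both exerting effort.) -/
noncomputable section

/-- Member H's share of the incentive pool under the Shapley Value mechanism
(with the equal-split convention when neither member exerts effort). -/
def pSVH (eH eL : ℕ) : ℝ :=
  if eH = 1 ∧ eL = 0 then 1 else if eH = 0 ∧ eL = 1 then 0 else 1 / 2

/-- Member L's share of the incentive pool under the Shapley Value mechanism. -/
def pSVL (eH eL : ℕ) : ℝ := 1 - pSVH eH eL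

/-- Member H's payoff in the effort game under the Shapley Value mechanism with
pooled incentive `P`. -/
def uSVH (a c P VH : ℝ) (eH eL : ℕ) : ℝ :=
  VH * pT a eH eL + pSVH eH eL * P - c * eH

/-- Member L's payoff in the effort game under the Shapley Value mechanism with
pooled incentive `P`. -/
def uSVL (a c P VL : ℝ) (eH eL : ℕ) : ℝ :=
  VL * pT a eH eL + pSVL eH eL * P - c * eL

/-- Nash equilibrium of the effort game under the Shapley Value mechanism: no member can
strictly increase her payoff by unilaterally changing her own effort in `{0, 1}`. -/
def isNE_SV (a c P VH VL : ℝ) (eH eL : ℕ) : Prop :=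
  (∀ e', e' = 0 ∨ e' = 1 → uSVH a c P VH e' eL ≤ uSVH a c P VH eH eL) ∧
  (∀ e', e' = 0 ∨ e' = 1 → uSVL a c P VL eH e' ≤ uSVL a c P VL eH eL)

/-! At `(1, 1)` a member's only deviation is to shirk, which saves `c` but costs her
`(2a - 1)V_m/4` of accuracy value and half the pool. Since `a > 1/2` and `V_L < V_H`,
H's no-deviation condition is implied by L's. -/

lemma forall_zero_or_one_le_one_iff {f : ℕ → ℝ} :
    (∀ e, e = 0 ∨ e = 1 → f e ≤ f 1) ↔ f 0 ≤ f 1 := by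
  refine ⟨fun h => h 0 (Or.inl rfl), fun h e he => ?_⟩
  rcases he with rfl | rfl
  exacts [h, le_rfl]

lemma uSVH_one_one_sub_zero_one (a c P VH : ℝ) :
    uSVH a c P VH 1 1 - uSVH a c P VH 0 1 = (2 * a - 1) * VH / 4 + P / 2 - c := by
  norm_num [uSVH, pT, pSVH]
  ring

lemma uSVL_one_one_sub_one_zero (a c P VL : ℝ) :
    uSVL a c P VL 1 1 - uSVL a c P VL 1 0 = (2 * a - 1) * VL / 4 + P / 2 - c := by
  norm_num [uSVL, pSVL, pT, pSVH]
  ring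

lemma isNE_SV_one_one_iff (a c P VH VL : ℝ) :
    isNE_SV a c P VH VL 1 1 ↔
      c ≤ (2 * a - 1) * VH / 4 + P / 2 ∧ c ≤ (2 * a - 1) * VL / 4 + P / 2 := by
  have hH := uSVH_one_one_sub_zero_one a c P VH
  have hL := uSVL_one_one_sub_one_zero a c P VL
  unfold isNE_SV
  rw [forall_zero_or_one_le_one_iff (f := fun e => uSVH a c P VH e 1),
    forall_zero_or_one_le_one_iff (f := fun e => uSVL a c P VL 1 e)]
  constructor <;> rintro ⟨h₁, h₂⟩ <;> constructor <;> linarith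

theorem SV_NE_both_effort_iff_general
    (a c P VH VL : ℝ)
    (ha : 1 / 2 < a ∧ a ≤ 1)
    (hV : VL < VH) :
    isNE_SV a c P VH VL 1 1 ↔ c ≤ (2 * a - 1) * VL / 4 + P / 2 := by
  have hVL_le_VH : (2 * a - 1) * VL ≤ (2 * a - 1) * VH :=
    mul_le_mul_of_nonneg_left hV.le (by linarith [ha.1])
  rw [isNE_SV_one_one_iff]
  exact ⟨And.right, fun hL => ⟨by linarith, hL⟩⟩

/-- under the Shapley Value mechanism with pooled incentive `P ≥ 0`, the
profile `(e_H, e_L) = (1, 1)` is a Nash equilibrium iff `c ≤ c_L + P/2`, where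
`c_L = (2a-1)V_L/4`. -/
theorem SV_NE_both_effort_iff
    (a c P VH VL : ℝ)
    (ha : 1 / 2 < a ∧ a ≤ 1) (hc : 0 < c) (hP : 0 ≤ P)
    (hVL : 0 < VL) (hV : VL < VH) :
    isNE_SV a c P VH VL 1 1 ↔ c ≤ (2 * a - 1) * VL / 4 + P / 2 :=
  SV_NE_both_effort_iff_general a c P VH VL ha hV
end
end

section
/- In the effort game under the Shapley Value mechanism with pooled incentive P ≥ 0, the profile (e_H, e_L) = (1, 0) is a Nash equilibrium if and only if c_L + P/2 ≤ c ≤ c_H + P/2, where c_L = (2a−1)V_L/4 and c_H = (2a−1)V_H/4. (Stage-II equilibrium characterization under SV, only the high-valuation member exerting effort.) -/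
/-! At the profile `(1, 0)` each member has a single deviation, and its payoff change is linear
in `c`: H stopping changes her payoff by `c - (2a-1)V_H/4 - P/2` (lower accuracy, and half the pool
instead of all of it), L starting changes hers by `(2a-1)V_L/4 + P/2 - c`. The profile is an
equilibrium iff neither change is positive. -/

noncomputable section

theorem isNE_SV_iff_of_le_one {a c P VH VL : ℝ} {eH eL : ℕ} (heH : eH ≤ 1) (heL : eL ≤ 1) :
    isNE_SV a c P VH VL eH eL ↔
      uSVH a c P VH (1 - eH) eL ≤ uSVH a c P VH eH eL ∧
        uSVL a c P VL eH (1 - eL) ≤ uSVL a c P VL eH eL := by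
  have flip_or_self {e e' : ℕ} (he : e ≤ 1) (he' : e' = 0 ∨ e' = 1) : e' = e ∨ e' = 1 - e := by
    omega
  refine ⟨fun ⟨hH, hL⟩ => ⟨hH _ (by omega), hL _ (by omega)⟩, fun ⟨hH, hL⟩ => ⟨?_, ?_⟩⟩
  · rintro e' he'
    rcases flip_or_self heH he' with rfl | rfl
    exacts [le_rfl, hH]
  · rintro e' he'
    rcases flip_or_self heL he' with rfl | rfl
    exacts [le_rfl, hL]

theorem uSVH_zero_zero_le_uSVH_one_zero_iff (a c P VH : ℝ) :
    uSVH a c P VH 0 0 ≤ uSVH a c P VH 1 0 ↔ c ≤ (2 * a - 1) * VH / 4 + P / 2 := by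
  simp only [uSVH, pT, pSVH]
  norm_num
  constructor <;> intro h <;> linarith

theorem uSVL_one_one_le_uSVL_one_zero_iff (a c P VL : ℝ) :
    uSVL a c P VL 1 1 ≤ uSVL a c P VL 1 0 ↔ (2 * a - 1) * VL / 4 + P / 2 ≤ c := by
  simp only [uSVL, pSVL, pT, pSVH]
  norm_num
  constructor <;> intro h <;> linarith

theorem SV_NE_only_H_effort_iff_general
    (a c P VH VL : ℝ) :
    isNE_SV a c P VH VL 1 0 ↔
      ((2 * a - 1) * VL / 4 + P / 2 ≤ c ∧ c ≤ (2 * a - 1) * VH / 4 + P / 2) := by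
  rw [isNE_SV_iff_of_le_one le_rfl zero_le_one, Nat.sub_self, Nat.sub_zero,
    uSVH_zero_zero_le_uSVH_one_zero_iff, uSVL_one_one_le_uSVL_one_zero_iff]
  exact and_comm

/-- under the Shapley Value mechanism with pooled incentive `P ≥ 0`, the
profile `(e_H, e_L) = (1, 0)` is a Nash equilibrium iff
`c_L + P/2 ≤ c ≤ c_H + P/2`, where `c_L = (2a-1)V_L/4` and `c_H = (2a-1)V_H/4`. -/
theorem SV_NE_only_H_effort_iff
    (a c P VH VL : ℝ)
    (ha : 1 / 2 < a ∧ a ≤ 1) (hc : 0 < c) (hP : 0 ≤ P)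
    (hVL : 0 < VL) (hV : VL < VH) :
    isNE_SV a c P VH VL 1 0 ↔
      ((2 * a - 1) * VL / 4 + P / 2 ≤ c ∧ c ≤ (2 * a - 1) * VH / 4 + P / 2) :=
  SV_NE_only_H_effort_iff_general a c P VH VL
end
end

section
/- In the effort game under the Shapley Value mechanism with pooled incentive P ≥ 0, the profile (e_H, e_L) = (0, 0) is a Nash equilibrium if and only if c ≥ c_H + P/2, where c_H = (2a−1)V_H/4. (Stage-II equilibrium characterization under SV, neither exerting effort.) -/
noncomputable section

/-! Starting to work alone lifts the team accuracy from `1/2` to `(2a+1)/4` and the Shapley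
share from `1/2` to `1`, so a member with valuation `V` gains `(2a-1)V/4 + P/2 - c` by
deviating from `(0, 0)`. The binding deviation is the one of `H`, as `V_L < V_H`. -/

theorem forall_zero_or_one_le_apply_zero_iff (f : ℕ → ℝ) :
    (∀ e, e = 0 ∨ e = 1 → f e ≤ f 0) ↔ f 1 ≤ f 0 :=
  ⟨fun h ↦ h 1 (Or.inr rfl), fun h e he ↦ by rcases he with rfl | rfl <;> simp [h]⟩

theorem uSVH_one_zero_sub_zero_zero (a c P VH : ℝ) :
    uSVH a c P VH 1 0 - uSVH a c P VH 0 0 = (2 * a - 1) * VH / 4 + P / 2 - c := by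
  norm_num [uSVH, pT, pSVH]
  ring

theorem uSVL_zero_one_sub_zero_zero (a c P VL : ℝ) :
    uSVL a c P VL 0 1 - uSVL a c P VL 0 0 = (2 * a - 1) * VL / 4 + P / 2 - c := by
  norm_num [uSVL, pSVL, pT, pSVH]
  ring

theorem isNE_SV_zero_zero_iff (a c P VH VL : ℝ) :
    isNE_SV a c P VH VL 0 0 ↔
      (2 * a - 1) * VH / 4 + P / 2 ≤ c ∧ (2 * a - 1) * VL / 4 + P / 2 ≤ c := by
  have hH := uSVH_one_zero_sub_zero_zero a c P VH
  have hL := uSVL_zero_one_sub_zero_zero a c P VL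
  rw [isNE_SV, forall_zero_or_one_le_apply_zero_iff (uSVH a c P VH · 0),
    forall_zero_or_one_le_apply_zero_iff (uSVL a c P VL 0 ·)]
  constructor <;> rintro ⟨h₁, h₂⟩ <;> constructor <;> linarith

theorem SV_NE_no_effort_iff_general
    (a c P VH VL : ℝ)
    (ha : 1 / 2 < a ∧ a ≤ 1)
    (hV : VL < VH) :
    isNE_SV a c P VH VL 0 0 ↔ (2 * a - 1) * VH / 4 + P / 2 ≤ c := by
  have hVLH : (2 * a - 1) * VL ≤ (2 * a - 1) * VH :=
    mul_le_mul_of_nonneg_left hV.le (by linarith [ha.1])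
  rw [isNE_SV_zero_zero_iff]
  exact ⟨And.left, fun hH ↦ ⟨hH, by linarith⟩⟩

/-- under the Shapley Value mechanism with pooled incentive `P ≥ 0`, the
profile `(e_H, e_L) = (0, 0)` is a Nash equilibrium iff `c ≥ c_H + P/2`, where
`c_H = (2a-1)V_H/4`. -/
theorem SV_NE_no_effort_iff
    (a c P VH VL : ℝ)
    (ha : 1 / 2 < a ∧ a ≤ 1) (hc : 0 < c) (hP : 0 ≤ P)
    (hVL : 0 < VL) (hV : VL < VH) :
    isNE_SV a c P VH VL 0 0 ↔ (2 * a - 1) * VH / 4 + P / 2 ≤ c :=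
  SV_NE_no_effort_iff_general a c P VH VL ha hV
end
end

section
/- Let the share functions (p_H, p_L) be those of any one of the three mechanisms EA, OA, or SV. Then for every pooled incentive P ≥ 0, no Nash equilibrium (e_H*, e_L*) of the effort game satisfies e_H* = 0 and e_L* = 1; equivalently, every Nash equilibrium satisfies e_H* ≥ e_L*. (Corollary 1: the low-valuation member exerts no more effort than the high-valuation member at equilibrium.) -/
noncomputable section

/-- Each member's share of the incentive pool under Equal Allocation. -/
def pEA (_eH _eL : ℕ) : ℝ := 1 / 2

/-- Member H's payoff in the effort game with share function `pH` and pool `P`. -/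
def uH (pH : ℕ → ℕ → ℝ) (a c P VH : ℝ) (eH eL : ℕ) : ℝ :=
  VH * pT a eH eL + pH eH eL * P - c * eH

/-- Member L's payoff in the effort game with share function `pL` and pool `P`. -/
def uL (pL : ℕ → ℕ → ℝ) (a c P VL : ℝ) (eH eL : ℕ) : ℝ :=
  VL * pT a eH eL + pL eH eL * P - c * eL

/-- Nash equilibrium of the effort game with share functions `(pH, pL)`: no member can
strictly increase her payoff by unilaterally changing her own effort in `{0, 1}`. -/
def isNE (pH pL : ℕ → ℕ → ℝ) (a c P VH VL : ℝ) (eH eL : ℕ) : Prop :=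
  (∀ e', e' = 0 ∨ e' = 1 → uH pH a c P VH e' eL ≤ uH pH a c P VH eH eL) ∧
  (∀ e', e' = 0 ∨ e' = 1 → uL pL a c P VL eH e' ≤ uL pL a c P VL eH eL)

lemma pT_one_one_sub_zero_one (a : ℝ) : pT a 1 1 - pT a 0 1 = (2 * a - 1) / 4 := by
  norm_num [pT]; ring

lemma pT_zero_one_sub_zero_zero (a : ℝ) : pT a 0 1 - pT a 0 0 = (2 * a - 1) / 4 := by
  norm_num [pT]; ring

/-- Both efforts raise accuracy by the same `(2a - 1)/4` at `(0, 1)` and H values it more, so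
H's total gain from joining strictly exceeds L's total gain from staying. -/
theorem not_isNE_zero_one {pH pL : ℕ → ℕ → ℝ} {a c P VH VL : ℝ}
    (ha : 1 / 2 < a) (hP : 0 ≤ P) (hV : VL < VH)
    (hshare : pL 0 1 - pL 0 0 ≤ pH 1 1 - pH 0 1) :
    ¬isNE pH pL a c P VH VL 0 1 := by
  rintro ⟨hH, hL⟩
  have hH_join := hH 1 (Or.inr rfl)
  have hL_quit := hL 0 (Or.inl rfl)
  simp only [uH, uL, Nat.cast_zero, Nat.cast_one] at hH_join hL_quit
  have hH_gain : VH * ((2 * a - 1) / 4) + (pH 1 1 - pH 0 1) * P ≤ c := by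
    rw [← pT_one_one_sub_zero_one]; linarith
  have hL_gain : c ≤ VL * ((2 * a - 1) / 4) + (pL 0 1 - pL 0 0) * P := by
    rw [← pT_zero_one_sub_zero_zero]; linarith
  have hvalue : 0 < (VH - VL) * ((2 * a - 1) / 4) := by
    apply mul_pos <;> linarith
  have hpool : 0 ≤ ((pH 1 1 - pH 0 1) - (pL 0 1 - pL 0 0)) * P :=
    mul_nonneg (sub_nonneg.mpr hshare) hP
  linarith

lemma pEA_share_gain_le : pEA 0 1 - pEA 0 0 ≤ pEA 1 1 - pEA 0 1 := le_rfl

lemma pOA_share_gain_le (a : ℝ) : pOA a 0 1 - pOA a 0 0 ≤ pOA a 1 1 - pOA a 0 1 := by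
  norm_num [pOA]
  nlinarith [sq_nonneg (2 * a - 1)]

lemma pSV_share_gain_eq : pSVL 0 1 - pSVL 0 0 = pSVH 1 1 - pSVH 0 1 := by
  norm_num [pSVL, pSVH]

theorem low_valuation_exerts_no_more_effort_general
    (a c P VH VL : ℝ)
    (ha : 1 / 2 < a ∧ a ≤ 1) (hP : 0 ≤ P)
    (hV : VL < VH)
    (pH pL : ℕ → ℕ → ℝ)
    (hmech : (pH = pEA ∧ pL = pEA) ∨ (pH = pOA a ∧ pL = pOA a) ∨
             (pH = pSVH ∧ pL = pSVL))
    (eH eL : ℕ) (heL : eL = 0 ∨ eL = 1)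
    (hNE : isNE pH pL a c P VH VL eH eL) :
    ¬(eH = 0 ∧ eL = 1) ∧ eL ≤ eH := by
  have hshare : pL 0 1 - pL 0 0 ≤ pH 1 1 - pH 0 1 := by
    rcases hmech with ⟨rfl, rfl⟩ | ⟨rfl, rfl⟩ | ⟨rfl, rfl⟩
    · exact pEA_share_gain_le
    · exact pOA_share_gain_le a
    · exact pSV_share_gain_eq.le
  have hnot : ¬(eH = 0 ∧ eL = 1) := by
    rintro ⟨rfl, rfl⟩
    exact not_isNE_zero_one ha.1 hP hV hshare hNE
  refine ⟨hnot, ?_⟩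
  rcases heL with rfl | rfl
  · exact Nat.zero_le eH
  · exact Nat.one_le_iff_ne_zero.mpr fun h => hnot ⟨h, rfl⟩

/-- Corollary 1: under each of EA, OA, and SV, for every pooled incentive
`P ≥ 0`, no Nash equilibrium of the effort game has `e_H* = 0` and `e_L* = 1`;
equivalently, every Nash equilibrium satisfies `e_H* ≥ e_L*`. -/
theorem low_valuation_exerts_no_more_effort
    (a c P VH VL : ℝ)
    (ha : 1 / 2 < a ∧ a ≤ 1) (hc : 0 < c) (hP : 0 ≤ P)
    (hVL : 0 < VL) (hV : VL < VH)
    (pH pL : ℕ → ℕ → ℝ)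
    (hmech : (pH = pEA ∧ pL = pEA) ∨ (pH = pOA a ∧ pL = pOA a) ∨
             (pH = pSVH ∧ pL = pSVL))
    (eH eL : ℕ) (heH : eH = 0 ∨ eH = 1) (heL : eL = 0 ∨ eL = 1)
    (hNE : isNE pH pL a c P VH VL eH eL) :
    ¬(eH = 0 ∧ eL = 1) ∧ eL ≤ eH :=
  low_valuation_exerts_no_more_effort_general a c P VH VL ha hP hV pH pL hmech eH eL heL hNE
end
end

section
/- For every contribution profile (d_H, d_L) ∈ {0, D}² and every effort profile (e_H, e_L) ∈ {0,1}², the social welfare (sum of the two members' payoffs) under the Shapley Value mechanism is at least the social welfare under Output Agreement: W^SV(d, e) − W^OA(d, e) = (1 − (p_H^OA(e) + p_L^OA(e)))·(d_H + d_L) ≥ 0. In particular, the inequality is strict whenever d_H + d_L > 0 and not both (e_H, e_L) = (1,1) with a = 1. -/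
noncomputable section

/-- Social welfare under Output Agreement: the sum of the two members' payoffs
`U_m = V_m·P_T(e) + p_m^OA(e)·(d_H + d_L) − d_m − c·e_m`. -/
def WOA (a c VH VL dH dL : ℝ) (eH eL : ℕ) : ℝ :=
  (VH * pT a eH eL + pOA a eH eL * (dH + dL) - dH - c * eH) +
  (VL * pT a eH eL + pOA a eH eL * (dH + dL) - dL - c * eL)

/-- Social welfare under the Shapley Value mechanism: the sum of the two members' payoffs
`U_m = V_m·P_T(e) + p_m^SV(e)·(d_H + d_L) − d_m − c·e_m`. -/
def WSV (a c VH VL dH dL : ℝ) (eH eL : ℕ) : ℝ :=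
  (VH * pT a eH eL + pSVH eH eL * (dH + dL) - dH - c * eH) +
  (VL * pT a eH eL + pSVL eH eL * (dH + dL) - dL - c * eL)

/-!
The efforts and valuations cancel in the welfare difference, leaving only the redistributed
pool: SV pays out all of it (its shares sum to one), whereas OA pays out the fraction
`2·p^OA`, which is `1/2` or `2a² − 2a + 1 = 1 − 2a(1 − a) ≤ 1`.
-/

theorem pSVH_add_pSVL (eH eL : ℕ) : pSVH eH eL + pSVL eH eL = 1 := by
  rw [pSVL, add_sub_cancel]

theorem WSV_sub_WOA (a c VH VL dH dL : ℝ) (eH eL : ℕ) :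
    WSV a c VH VL dH dL eH eL - WOA a c VH VL dH dL eH eL
      = (1 - (pOA a eH eL + pOA a eH eL)) * (dH + dL) := by
  rw [WSV, WOA, ← pSVH_add_pSVL eH eL]
  ring

theorem pOA_le_half {a : ℝ} (h0 : 0 ≤ a) (h1 : a ≤ 1) (eH eL : ℕ) : pOA a eH eL ≤ 1 / 2 := by
  unfold pOA
  split_ifs
  · nlinarith [mul_nonneg h0 (sub_nonneg.2 h1)]
  · norm_num

theorem pOA_lt_half {a : ℝ} (h0 : 0 < a) (h1 : a ≤ 1) {eH eL : ℕ}
    (h : ¬(eH = 1 ∧ eL = 1 ∧ a = 1)) : pOA a eH eL < 1 / 2 := by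
  unfold pOA
  split_ifs with he
  · have ha : a < 1 := lt_of_le_of_ne h1 fun ha => h ⟨he.1, he.2, ha⟩
    nlinarith [mul_pos h0 (sub_pos.2 ha)]
  · norm_num

theorem SV_welfare_dominates_OA_general
    (a c D VH VL : ℝ)
    (ha : 1 / 2 < a ∧ a ≤ 1) (hD : 0 < D)
    (dH dL : ℝ) (hdH : dH = 0 ∨ dH = D) (hdL : dL = 0 ∨ dL = D)
    (eH eL : ℕ) :
    WSV a c VH VL dH dL eH eL - WOA a c VH VL dH dL eH eL
        = (1 - (pOA a eH eL + pOA a eH eL)) * (dH + dL) ∧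
    0 ≤ WSV a c VH VL dH dL eH eL - WOA a c VH VL dH dL eH eL ∧
    (0 < dH + dL → ¬(eH = 1 ∧ eL = 1 ∧ a = 1) →
      0 < WSV a c VH VL dH dL eH eL - WOA a c VH VL dH dL eH eL) := by
  obtain ⟨ha0, ha1⟩ := ha
  have hpos : 0 < a := by linarith
  have hd : 0 ≤ dH + dL := by
    rcases hdH with rfl | rfl <;> rcases hdL with rfl | rfl <;> linarith
  rw [WSV_sub_WOA]
  refine ⟨rfl, ?_, fun hd' hne => ?_⟩
  · exact mul_nonneg (by linarith [pOA_le_half hpos.le ha1 eH eL]) hd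
  · exact mul_pos (by linarith [pOA_lt_half hpos ha1 hne]) hd'

/-- for every contribution profile in `{0, D}²` and every effort profile
in `{0,1}²`, the social welfare under SV exceeds that under OA by exactly
`(1 − (p_H^OA(e) + p_L^OA(e)))·(d_H + d_L) ≥ 0`, with strict inequality whenever
`d_H + d_L > 0` and it is not the case that both `(e_H, e_L) = (1,1)` and `a = 1`. -/
theorem SV_welfare_dominates_OA
    (a c D VH VL : ℝ)
    (ha : 1 / 2 < a ∧ a ≤ 1) (hc : 0 < c) (hD : 0 < D)
    (hVL : 0 < VL) (hV : VL < VH)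
    (dH dL : ℝ) (hdH : dH = 0 ∨ dH = D) (hdL : dL = 0 ∨ dL = D)
    (eH eL : ℕ) (heH : eH = 0 ∨ eH = 1) (heL : eL = 0 ∨ eL = 1) :
    WSV a c VH VL dH dL eH eL - WOA a c VH VL dH dL eH eL
        = (1 - (pOA a eH eL + pOA a eH eL)) * (dH + dL) ∧
    0 ≤ WSV a c VH VL dH dL eH eL - WOA a c VH VL dH dL eH eL ∧
    (0 < dH + dL → ¬(eH = 1 ∧ eL = 1 ∧ a = 1) →
      0 < WSV a c VH VL dH dL eH eL - WOA a c VH VL dH dL eH eL) :=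
  SV_welfare_dominates_OA_general a c D VH VL ha hD dH dL hdH hdL eH eL
end
end
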